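/- (Theorem 3.1: strong convergence of the Inertial Hybrid Projection Algorithm.) Let H be a real Hilbert space, let F : H → H be monotone and L-Lipschitz continuous with L > 0, let G : H → Set H be maximal monotone, and assume Ω := {x ∈ H : 0 ∈ Fx + Gx} is nonempty. Fix μ ∈ (0,1), γ₀ > 0, a sequence (α_n) in [0,1), and x_{−1} = x₀ ∈ H. Suppose sequences (x_n)_{n≥0}, (w_n), (y_n), (z_n) in H and positive reals (γ_n) satisfy, for all n ≥ 0: w_n = x_n + α_n(x_n − x_{n−1}); w_n − γ_n F w_n − y_n ∈ γ_n • G y_n; z_n = y_n − γ_n(F y_n − F w_n); γ_{n+1} = min{ μ‖w_n − y_n‖/‖Fw_n − Fy_n‖ , γ_n } if Fw_n ≠ Fy_n and γ_{n+1} = γ_n otherwise; C_n = {u ∈ H : ‖z_n − u‖² ≤ ‖w_n − u‖² − (1 − μ²γ_n²/γ_{n+1}²)‖w_n − y_n‖²}; Q_n = {u ∈ H : ⟨x_n − u, x_n − x₀⟩ ≤ 0}; and x_{n+1} is the metric projection of x₀ onto C_n ∩ Q_n. Then (x_n) converges strongly (in norm) to the metric projection q* of x₀ onto Ω. -/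

import Mathlib

open RealInnerProductSpace Pointwise Filter Classical

open Topology

/-!
The Minty set `M = {u | ∀ v, ∀ q ∈ G v, 0 ≤ ⟪F v + q, v - u⟫}` contains the zero set `Ω`, and
Tseng's estimate for `z n` puts it inside every `C n`; inductively it then lies in every half-space
`Q n`, so `x` is a hybrid (CQ) projection sequence for `M`. Hence `‖x 0 - x n‖` increases to a
limit `ℓ ≤ dist (x 0) M` and `‖x (n + 1) - x n‖ → 0`. The step sizes decrease to a positive limit,
so `x (n + 1) ∈ C n` forces `‖w n - y n‖ → 0`, and with it the residual `g n + F (y n)`, where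
`g n ∈ G (y n)` comes from the resolvent step. Monotonicity places every weak cluster point `u` of
the bounded sequence `x` in `M`; weak lower semicontinuity of the norm gives `‖x 0 - u‖ ≤ ℓ`, and
`u ∈ Q n` gives `‖x n - u‖² ≤ ‖x 0 - u‖² - ‖x 0 - x n‖² → 0`, so `x → u` strongly. Only now is
maximality of `G` used, through the closedness of its graph, to get `u ∈ Ω`; and `u` is the point
of `M ⊇ Ω` nearest to `x 0`.
-/

theorem Filter.Tendsto.of_sq_tendsto_zero {f : ℕ → ℝ} (hf : ∀ n, 0 ≤ f n)
    (h : Tendsto (fun n => f n ^ 2) atTop (𝓝 0)) : Tendsto f atTop (𝓝 0) := by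
  simpa [Real.sqrt_sq (hf _)] using h.sqrt

theorem tendsto_zero_of_mul_le {κ s t : ℕ → ℝ} {k : ℝ} (hk : 0 < k)
    (hκ : Tendsto κ atTop (𝓝 k)) (hs : ∀ n, 0 ≤ s n) (hst : ∀ n, κ n * s n ≤ t n)
    (ht : Tendsto t atTop (𝓝 0)) : Tendsto s atTop (𝓝 0) := by
  refine squeeze_zero' (Eventually.of_forall hs) ?_ (by simpa using ht.div_const (k / 2))
  filter_upwards [hκ.eventually (eventually_ge_nhds (half_lt_self hk))] with n hn
  rw [le_div_iff₀ (half_pos hk)]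
  nlinarith [hs n, hst n]

theorem tendsto_one_sub_mul_sq_div_sq {γ : ℕ → ℝ} {γ' : ℝ} (μ : ℝ) (hγ' : γ' ≠ 0)
    (hγ : Tendsto γ atTop (𝓝 γ')) :
    Tendsto (fun n => 1 - μ ^ 2 * γ n ^ 2 / γ (n + 1) ^ 2) atTop (𝓝 (1 - μ ^ 2)) := by
  have := ((hγ.pow 2).const_mul (μ ^ 2)).div ((hγ.comp (tendsto_add_atTop_nat 1)).pow 2)
    (pow_ne_zero 2 hγ')
  rw [mul_div_assoc, div_self (pow_ne_zero 2 hγ'), mul_one] at this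
  exact this.const_sub 1

section NormedAddCommGroup

variable {H : Type*} [NormedAddCommGroup H]

noncomputable def adaptiveStep (μ : ℝ) (F : H → H) (w y : H) (γ : ℝ) : ℝ :=
  if F w ≠ F y then min (μ * ‖w - y‖ / ‖F w - F y‖) γ else γ

theorem adaptiveStep_le (μ : ℝ) (F : H → H) (w y : H) (γ : ℝ) : adaptiveStep μ F w y γ ≤ γ := by
  unfold adaptiveStep
  split_ifs
  exacts [min_le_right _ _, le_rfl]

theorem le_adaptiveStep {F : H → H} {μ L m γ : ℝ} {w y : H} (hμ : 0 ≤ μ) (hL : 0 < L)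
    (hF : ‖F w - F y‖ ≤ L * ‖w - y‖) (hmγ : m ≤ γ) (hmL : m ≤ μ / L) :
    m ≤ adaptiveStep μ F w y γ := by
  unfold adaptiveStep
  split_ifs with hne
  · refine le_min (hmL.trans ?_) hmγ
    rw [div_le_div_iff₀ hL (norm_pos_iff.2 (sub_ne_zero.2 hne))]
    calc μ * ‖F w - F y‖ ≤ μ * (L * ‖w - y‖) := by gcongr
      _ = μ * ‖w - y‖ * L := by ring
  · exact hmγ

theorem adaptiveStep_mul_norm_sub_le {F : H → H} {μ γ : ℝ} {w y : H} (hμ : 0 ≤ μ) :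
    adaptiveStep μ F w y γ * ‖F w - F y‖ ≤ μ * ‖w - y‖ := by
  unfold adaptiveStep
  split_ifs with hne
  · rw [← le_div_iff₀ (norm_pos_iff.2 (sub_ne_zero.2 hne))]
    exact min_le_left _ _
  · rw [not_not.1 hne, sub_self, norm_zero, mul_zero]
    positivity

theorem exists_tendsto_of_adaptiveStep {F : H → H} {w y : ℕ → H} {γ : ℕ → ℝ} {μ L : ℝ}
    (hγ : ∀ n, γ (n + 1) = adaptiveStep μ F (w n) (y n) (γ n)) (hγ0 : 0 < γ 0) (hμ : 0 < μ)
    (hL : 0 < L) (hF : ∀ a b, ‖F a - F b‖ ≤ L * ‖a - b‖) :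
    ∃ γ' > 0, Tendsto γ atTop (𝓝 γ') := by
  have hlow : ∀ n, min (γ 0) (μ / L) ≤ γ n := fun n => by
    induction n with
    | zero => exact min_le_left _ _
    | succ n ih => exact (hγ n).symm ▸ le_adaptiveStep hμ.le hL (hF _ _) ih (min_le_right _ _)
  have hanti : Antitone γ :=
    antitone_nat_of_succ_le fun n => (hγ n).trans_le (adaptiveStep_le _ _ _ _ _)
  exact ⟨_, (lt_min hγ0 (div_pos hμ hL)).trans_le (le_ciInf hlow),
    tendsto_atTop_ciInf hanti ⟨_, by rintro _ ⟨n, rfl⟩; exact hlow n⟩⟩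

theorem tendsto_norm_sub_of_sq_le {x w y z : ℕ → H}
    {κ : ℕ → ℝ} {k : ℝ} (hk : 0 < k) (hκ : Tendsto κ atTop (𝓝 k))
    (hC : ∀ n, ‖z n - x (n + 1)‖ ^ 2 ≤ ‖w n - x (n + 1)‖ ^ 2 - κ n * ‖w n - y n‖ ^ 2)
    (hxx : Tendsto (fun n => ‖x (n + 1) - x n‖) atTop (𝓝 0))
    (hwx : Tendsto (fun n => ‖w n - x n‖) atTop (𝓝 0)) :
    Tendsto (fun n => ‖w n - y n‖) atTop (𝓝 0) := by
  have hwx' : Tendsto (fun n => ‖w n - x (n + 1)‖) atTop (𝓝 0) := by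
    refine squeeze_zero (fun n => norm_nonneg _) (fun n => ?_) (by simpa using hwx.add hxx)
    simpa only [norm_sub_rev (x n)] using
      norm_sub_le_norm_sub_add_norm_sub (w n) (x n) (x (n + 1))
  refine .of_sq_tendsto_zero (fun n => norm_nonneg _) (tendsto_zero_of_mul_le hk hκ
    (fun n => sq_nonneg _) (fun n => ?_) (by simpa using hwx'.pow 2))
  linarith [hC n, sq_nonneg ‖z n - x (n + 1)‖]

theorem tendsto_norm_sub_of_inertial [NormedSpace ℝ H] {x w : ℕ → H} {α : ℕ → ℝ}
    (hα : ∀ n, α n ∈ Set.Icc (0 : ℝ) 1)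
    (hw : ∀ n, w (n + 1) = x (n + 1) + α (n + 1) • (x (n + 1) - x n))
    (hx : Tendsto (fun n => ‖x (n + 1) - x n‖) atTop (𝓝 0)) :
    Tendsto (fun n => ‖w n - x n‖) atTop (𝓝 0) := by
  rw [← tendsto_add_atTop_iff_nat 1]
  refine squeeze_zero (fun n => norm_nonneg _) (fun n => ?_) hx
  rw [hw n, add_sub_cancel_left, norm_smul, Real.norm_of_nonneg (hα _).1]
  exact mul_le_of_le_one_left (norm_nonneg _) (hα _).2

end NormedAddCommGroup

section InnerProductSpace

variable {H : Type*} [NormedAddCommGroup H] [InnerProductSpace ℝ H]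

-- Each functional `⟪·, v⟫` is only required to cluster separately; nothing more is used.
def IsWeakClusterPt (x : ℕ → H) (u : H) : Prop :=
  ∀ v, MapClusterPt ⟪u, v⟫ atTop fun n => ⟪x n, v⟫

theorem exists_isWeakClusterPt [CompleteSpace H] {x : ℕ → H} {R : ℝ} (hR : ∀ n, ‖x n‖ ≤ R) :
    ∃ u, IsWeakClusterPt x u := by
  let D := InnerProductSpace.toDual ℝ H
  let s : ℕ → WeakDual ℝ H := fun n => StrongDual.toWeakDual (D (x n))
  have hs : ∀ n, s n ∈ WeakDual.toStrongDual ⁻¹' Metric.closedBall 0 R := fun n => by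
    simpa [s, D] using hR n
  obtain ⟨f, -, hf⟩ := (WeakDual.isCompact_closedBall (𝕜 := ℝ) (E := H) 0 R).exists_clusterPt
    (f := map s atTop) (le_principal_iff.2 (mem_map.2 (Eventually.of_forall hs)))
  refine ⟨D.symm (WeakDual.toStrongDual f), fun v => ?_⟩
  rw [InnerProductSpace.toDual_symm_apply]
  exact (hf.map (WeakDual.eval_continuous v).continuousAt tendsto_map).mono (by rw [map_map]; rfl)

theorem IsWeakClusterPt.inner_le {x : ℕ → H} {u v : H} {b : ℕ → ℝ} {β : ℝ}
    (hu : IsWeakClusterPt x u) (hle : ∀ n, ⟪x n, v⟫ ≤ b n) (hb : Tendsto b atTop (𝓝 β)) :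
    ⟪u, v⟫ ≤ β := by
  obtain ⟨ψ, hψ, hlim⟩ := (hu v).tendsto_subseq
  exact le_of_tendsto_of_tendsto' hlim (hb.comp hψ.tendsto_atTop) fun n => hle (ψ n)

theorem IsWeakClusterPt.norm_sub_le {x : ℕ → H} {u c : H} {r : ℝ} (hu : IsWeakClusterPt x u)
    (hr : ∀ n, ‖x n - c‖ ≤ r) : ‖u - c‖ ≤ r := by
  have hle : ⟪u, u - c⟫ ≤ ⟪c, u - c⟫ + r * ‖u - c‖ := by
    refine hu.inner_le (fun n => ?_) tendsto_const_nhds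
    calc ⟪x n, u - c⟫ = ⟪c, u - c⟫ + ⟪x n - c, u - c⟫ := by rw [inner_sub_left]; ring
      _ ≤ ⟪c, u - c⟫ + ‖x n - c‖ * ‖u - c‖ := by gcongr; exact real_inner_le_norm _ _
      _ ≤ ⟪c, u - c⟫ + r * ‖u - c‖ := by gcongr; exact hr n
  have hsq : ‖u - c‖ ^ 2 ≤ r * ‖u - c‖ := by
    rw [← real_inner_self_eq_norm_sq, inner_sub_left]; linarith
  nlinarith [norm_nonneg (u - c), (norm_nonneg _).trans (hr 0)]

theorem norm_sub_sub_sq_eq (w y u e : H) :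
    ‖y - e - u‖ ^ 2 = ‖w - u‖ ^ 2 - ‖w - y‖ ^ 2 - 2 * ⟪w - y + e, y - u⟫ + ‖e‖ ^ 2 := by
  rw [show y - e - u = (y - u) - e by abel, show w - u = (w - y) + (y - u) by abel,
    norm_sub_sq_real, norm_add_sq_real, inner_add_left, real_inner_comm e]
  ring

def IsMetricProj (K : Set H) (x₀ p : H) : Prop :=
  p ∈ K ∧ ∀ v ∈ K, ‖x₀ - p‖ ≤ ‖x₀ - v‖

theorem IsMetricProj.inner_sub_nonpos {K : Set H} {x₀ p u : H} (hK : Convex ℝ K)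
    (hp : IsMetricProj K x₀ p) (hu : u ∈ K) : ⟪p - u, p - x₀⟫ ≤ 0 := by
  have : Nonempty K := ⟨⟨p, hp.1⟩⟩
  have hinf : ‖x₀ - p‖ = ⨅ v : K, ‖x₀ - v‖ :=
    le_antisymm (le_ciInf fun v => hp.2 v v.2)
      (ciInf_le ⟨0, by rintro _ ⟨v, rfl⟩; positivity⟩ (⟨p, hp.1⟩ : K))
  rw [← neg_sub u p, ← neg_sub x₀ p, inner_neg_neg, real_inner_comm]
  exact (norm_eq_iInf_iff_real_inner_le_zero hK hp.1).1 hinf u hu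

theorem convex_setOf_norm_sub_sq_le (z w : H) (c : ℝ) :
    Convex ℝ {u | ‖z - u‖ ^ 2 ≤ ‖w - u‖ ^ 2 - c} := by
  have : {u | ‖z - u‖ ^ 2 ≤ ‖w - u‖ ^ 2 - c} =
      {u | ⟪w - z, u⟫ ≤ (‖w‖ ^ 2 - ‖z‖ ^ 2 - c) / 2} := by
    ext u
    simp only [Set.mem_ofPred_eq, norm_sub_sq_real, inner_sub_left, real_inner_comm u]
    constructor <;> intro <;> linarith
  rw [this]
  exact convex_halfSpace_le (innerₛₗ ℝ (w - z)).isLinear _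

def cqHalfSpace (x : ℕ → H) (n : ℕ) : Set H :=
  {u | ⟪x n - u, x n - x 0⟫ ≤ 0}

theorem convex_cqHalfSpace (x : ℕ → H) (n : ℕ) : Convex ℝ (cqHalfSpace x n) := by
  have : cqHalfSpace x n = {u | ⟪x n - x 0, x n⟫ ≤ ⟪x n - x 0, u⟫} := Set.ext fun u => by
    rw [cqHalfSpace, Set.mem_ofPred_eq, Set.mem_ofPred_eq, inner_sub_left, sub_nonpos,
      real_inner_comm (x n - x 0) (x n), real_inner_comm (x n - x 0) u]
  rw [this]
  exact convex_halfSpace_ge (innerₛₗ ℝ (x n - x 0)).isLinear _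

theorem norm_sub_sq_add_norm_sub_sq_le_of_mem_cqHalfSpace {x : ℕ → H} {n : ℕ} {u : H}
    (hu : u ∈ cqHalfSpace x n) :
    ‖x 0 - x n‖ ^ 2 + ‖x n - u‖ ^ 2 ≤ ‖x 0 - u‖ ^ 2 := by
  have hinner : ⟪x 0 - x n, x n - u⟫ = -⟪x n - u, x n - x 0⟫ := by
    rw [real_inner_comm, ← inner_neg_right, neg_sub]
  rw [show x 0 - u = (x 0 - x n) + (x n - u) by abel, norm_add_sq_real, hinner]
  linarith [show ⟪x n - u, x n - x 0⟫ ≤ 0 from hu]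

structure IsHybridProjection (x : ℕ → H) (C : ℕ → Set H) (M : Set H) : Prop where
  convex : ∀ n, Convex ℝ (C n)
  subset : ∀ n, M ⊆ C n
  isMetricProj : ∀ n, IsMetricProj (C n ∩ cqHalfSpace x n) (x 0) (x (n + 1))

namespace IsHybridProjection

variable {x : ℕ → H} {C : ℕ → Set H} {M : Set H}

theorem subset_cqHalfSpace (h : IsHybridProjection x C M) (n : ℕ) : M ⊆ cqHalfSpace x n := by
  induction n with
  | zero => intro v _; simp [cqHalfSpace]
  | succ n ih =>
    intro v hv
    exact (h.isMetricProj n).inner_sub_nonpos ((h.convex n).inter (convex_cqHalfSpace x n))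
      ⟨h.subset n hv, ih hv⟩

theorem norm_sub_le (h : IsHybridProjection x C M) {v : H} (hv : v ∈ M) (n : ℕ) :
    ‖x 0 - x n‖ ≤ ‖x 0 - v‖ := by
  cases n with
  | zero => simp
  | succ n => exact (h.isMetricProj n).2 v ⟨h.subset n hv, h.subset_cqHalfSpace n hv⟩

theorem monotone_norm_sub (h : IsHybridProjection x C M) : Monotone fun n => ‖x 0 - x n‖ := by
  refine monotone_nat_of_le_succ fun n => ?_
  have := norm_sub_sq_add_norm_sub_sq_le_of_mem_cqHalfSpace (h.isMetricProj n).1.2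
  exact le_of_sq_le_sq (by linarith [sq_nonneg ‖x n - x (n + 1)‖]) (norm_nonneg _)

theorem exists_tendsto_norm_sub (h : IsHybridProjection x C M) (hM : M.Nonempty) :
    ∃ ℓ, Tendsto (fun n => ‖x 0 - x n‖) atTop (𝓝 ℓ) := by
  obtain ⟨v, hv⟩ := hM
  exact ⟨_, tendsto_atTop_ciSup h.monotone_norm_sub
    ⟨‖x 0 - v‖, by rintro _ ⟨n, rfl⟩; exact h.norm_sub_le hv n⟩⟩

theorem tendsto_norm_succ_sub (h : IsHybridProjection x C M) (hM : M.Nonempty) :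
    Tendsto (fun n => ‖x (n + 1) - x n‖) atTop (𝓝 0) := by
  obtain ⟨ℓ, hℓ⟩ := h.exists_tendsto_norm_sub hM
  have hgap : Tendsto (fun n => ‖x 0 - x (n + 1)‖ ^ 2 - ‖x 0 - x n‖ ^ 2) atTop (𝓝 0) := by
    simpa using ((hℓ.comp (tendsto_add_atTop_nat 1)).pow 2).sub (hℓ.pow 2)
  refine .of_sq_tendsto_zero (fun n => norm_nonneg _) (squeeze_zero (fun n => sq_nonneg _)
    (fun n => ?_) hgap)
  have := norm_sub_sq_add_norm_sub_sq_le_of_mem_cqHalfSpace (h.isMetricProj n).1.2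
  rw [norm_sub_rev (x n)] at this
  linarith

theorem tendsto_of_isWeakClusterPt (h : IsHybridProjection x C M) {u : H} (huM : u ∈ M)
    (hu : IsWeakClusterPt x u) : Tendsto x atTop (𝓝 u) := by
  obtain ⟨ℓ, hℓ⟩ := h.exists_tendsto_norm_sub ⟨u, huM⟩
  have hle : ∀ n, ‖x 0 - x n‖ ≤ ℓ := h.monotone_norm_sub.ge_of_tendsto hℓ
  have hu0 : ‖x 0 - u‖ ≤ ℓ := by
    rw [norm_sub_rev]
    exact hu.norm_sub_le fun n => norm_sub_rev (x n) (x 0) ▸ hle n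
  have hgap : Tendsto (fun n => ℓ ^ 2 - ‖x 0 - x n‖ ^ 2) atTop (𝓝 0) := by
    have := (hℓ.pow 2).const_sub (ℓ ^ 2)
    rw [sub_self] at this
    exact this
  rw [tendsto_iff_norm_sub_tendsto_zero]
  refine .of_sq_tendsto_zero (fun n => norm_nonneg _) (squeeze_zero (fun n => sq_nonneg _)
    (fun n => ?_) hgap)
  have := norm_sub_sq_add_norm_sub_sq_le_of_mem_cqHalfSpace (h.subset_cqHalfSpace n huM)
  nlinarith [norm_nonneg (x 0 - u)]

theorem norm_le (h : IsHybridProjection x C M) {v : H} (hv : v ∈ M) (n : ℕ) :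
    ‖x n‖ ≤ ‖x 0‖ + ‖x 0 - v‖ :=
  (norm_le_norm_add_norm_sub (x 0) (x n)).trans (by gcongr; exact h.norm_sub_le hv n)

theorem isMetricProj_of_tendsto (h : IsHybridProjection x C M) {u : H} (huM : u ∈ M)
    (hxu : Tendsto x atTop (𝓝 u)) : IsMetricProj M (x 0) u :=
  ⟨huM, fun _ hv => le_of_tendsto' (tendsto_const_nhds.sub hxu).norm fun n => h.norm_sub_le hv n⟩

end IsHybridProjection

def mintySet (F : H → H) (G : H → Set H) : Set H :=
  {u | ∀ v q, q ∈ G v → 0 ≤ ⟪F v + q, v - u⟫}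

section MonotoneOperator

variable {F : H → H} {G : H → Set H}

theorem setOf_neg_mem_subset_mintySet (hF : ∀ x y, 0 ≤ ⟪F x - F y, x - y⟫)
    (hG : ∀ x y p q, p ∈ G x → q ∈ G y → 0 ≤ ⟪p - q, x - y⟫) :
    {x | -F x ∈ G x} ⊆ mintySet F G := by
  intro u hu v q hq
  rw [show F v + q = (F v - F u) + (q - -F u) by abel, inner_add_left]
  linarith [hF v u, hG v u q (-F u) hq hu]

theorem neg_mem_of_tendsto (hF : Continuous F)
    (hG : ∀ x y p q, p ∈ G x → q ∈ G y → 0 ≤ ⟪p - q, x - y⟫)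
    (hGmax : ∀ x p, (∀ y q, q ∈ G y → 0 ≤ ⟪p - q, x - y⟫) → p ∈ G x)
    {y g : ℕ → H} {u : H} (hg : ∀ n, g n ∈ G (y n)) (hy : Tendsto y atTop (𝓝 u))
    (hgy : Tendsto (fun n => ‖g n + F (y n)‖) atTop (𝓝 0)) : -F u ∈ G u := by
  have hgu : Tendsto g atTop (𝓝 (-F u)) := by
    simpa using (tendsto_zero_iff_norm_tendsto_zero.2 hgy).sub ((hF.tendsto u).comp hy)
  exact hGmax u _ fun v q hq => ge_of_tendsto' ((hgu.sub_const q).inner (hy.sub_const v))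
    fun n => hG _ _ _ _ (hg n) hq

theorem mem_mintySet_of_isWeakClusterPt (hF : ∀ x y, 0 ≤ ⟪F x - F y, x - y⟫)
    (hG : ∀ x y p q, p ∈ G x → q ∈ G y → 0 ≤ ⟪p - q, x - y⟫)
    {x y g : ℕ → H} {u : H} {R : ℝ} (hx : ∀ n, ‖x n‖ ≤ R) (hg : ∀ n, g n ∈ G (y n))
    (hxy : Tendsto (fun n => ‖x n - y n‖) atTop (𝓝 0))
    (hgy : Tendsto (fun n => ‖g n + F (y n)‖) atTop (𝓝 0))
    (hu : IsWeakClusterPt x u) : u ∈ mintySet F G := by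
  intro v q hq
  have hmono : ∀ n, ⟪F v + q, y n - v⟫ ≤ ⟪g n + F (y n), y n - v⟫ := fun n => by
    have := hG _ _ _ _ (hg n) hq
    have := hF (y n) v
    rw [← sub_nonneg, ← inner_sub_left,
      show g n + F (y n) - (F v + q) = (g n - q) + (F (y n) - F v) by abel, inner_add_left]
    linarith
  have hyv : ∀ n, ‖y n - v‖ ≤ ‖x n - y n‖ + R + ‖v‖ := fun n =>
    calc ‖y n - v‖ ≤ ‖y n - x n‖ + ‖x n - v‖ := norm_sub_le_norm_sub_add_norm_sub _ _ _
      _ ≤ ‖x n - y n‖ + (‖x n‖ + ‖v‖) := by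
          rw [norm_sub_rev (y n)]; gcongr; exact norm_sub_le _ _
      _ ≤ ‖x n - y n‖ + R + ‖v‖ := by linarith [hx n]
  have hbound : ∀ n, ⟪x n, F v + q⟫ ≤ ⟪v, F v + q⟫ + ‖x n - y n‖ * ‖F v + q‖ +
      ‖g n + F (y n)‖ * (‖x n - y n‖ + R + ‖v‖) := fun n =>
    calc ⟪x n, F v + q⟫ = ⟪v, F v + q⟫ + ⟪x n - y n, F v + q⟫ + ⟪y n - v, F v + q⟫ := by
          rw [← inner_add_left, ← inner_add_left]; congr 1; abel
      _ ≤ ⟪v, F v + q⟫ + ‖x n - y n‖ * ‖F v + q‖ + ‖g n + F (y n)‖ * ‖y n - v‖ :=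
          add_le_add (add_le_add le_rfl (real_inner_le_norm _ _))
            ((real_inner_comm _ _).le.trans ((hmono n).trans (real_inner_le_norm _ _)))
      _ ≤ _ := by gcongr; exact hyv n
  have hlim : Tendsto (fun n => ⟪v, F v + q⟫ + ‖x n - y n‖ * ‖F v + q‖ +
      ‖g n + F (y n)‖ * (‖x n - y n‖ + R + ‖v‖)) atTop (𝓝 ⟪v, F v + q⟫) := by
    simpa using ((hxy.mul_const _).const_add _).add (hgy.mul ((hxy.add_const R).add_const ‖v‖))
  have := hu.inner_le hbound hlim
  rw [inner_sub_right, real_inner_comm v, real_inner_comm u]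
  linarith

theorem norm_sub_sq_le_of_mem_mintySet {u w y g : H} {γ γ' μ : ℝ} (hu : u ∈ mintySet F G)
    (hg : g ∈ G y) (hgy : γ • g = w - γ • F w - y) (hγ : 0 < γ) (hγ' : 0 < γ')
    (hstep : γ' * ‖F w - F y‖ ≤ μ * ‖w - y‖) :
    ‖y - γ • (F y - F w) - u‖ ^ 2 ≤
      ‖w - u‖ ^ 2 - (1 - μ ^ 2 * γ ^ 2 / γ' ^ 2) * ‖w - y‖ ^ 2 := by
  have hinner : ⟪w - y + γ • (F y - F w), y - u⟫ = γ * ⟪F y + g, y - u⟫ := by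
    rw [← real_inner_smul_left, smul_add, hgy, smul_sub]
    congr 1
    abel
  have hnorm : ‖γ • (F y - F w)‖ ^ 2 ≤ μ ^ 2 * γ ^ 2 / γ' ^ 2 * ‖w - y‖ ^ 2 := by
    rw [div_mul_eq_mul_div, le_div_iff₀ (by positivity), norm_smul, Real.norm_of_nonneg hγ.le,
      norm_sub_rev]
    calc (γ * ‖F w - F y‖) ^ 2 * γ' ^ 2 = γ ^ 2 * (γ' * ‖F w - F y‖) ^ 2 := by ring
      _ ≤ γ ^ 2 * (μ * ‖w - y‖) ^ 2 := by gcongr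
      _ = μ ^ 2 * γ ^ 2 * ‖w - y‖ ^ 2 := by ring
  rw [norm_sub_sub_sq_eq w, hinner]
  nlinarith [mul_nonneg hγ.le (hu y g hg)]

theorem norm_add_le_of_smul_eq {w y g : H} {γ L : ℝ} (hγ : 0 < γ)
    (hgy : γ • g = w - γ • F w - y) (hF : ‖F w - F y‖ ≤ L * ‖w - y‖) :
    ‖g + F y‖ ≤ (γ⁻¹ + L) * ‖w - y‖ := by
  have hg : g + F y = γ⁻¹ • (w - y) - (F w - F y) := by
    rw [← inv_smul_smul₀ hγ.ne' g, hgy]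
    simp only [smul_sub, inv_smul_smul₀ hγ.ne']
    abel
  rw [hg, add_mul]
  refine (norm_sub_le _ _).trans (add_le_add ?_ hF)
  rw [norm_smul, Real.norm_of_nonneg (inv_nonneg.2 hγ.le)]

end MonotoneOperator

end InnerProductSpace

theorem thm31_IHPA_general {H : Type*} [NormedAddCommGroup H] [InnerProductSpace ℝ H]
    [CompleteSpace H]
    (F : H → H) (G : H → Set H) (L : ℝ) (hL : 0 < L)
    (hFmono : ∀ x y : H, 0 ≤ ⟪F x - F y, x - y⟫)
    (hFlip : ∀ x y : H, ‖F x - F y‖ ≤ L * ‖x - y‖)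
    (hGmono : ∀ x y p q : H, p ∈ G x → q ∈ G y → 0 ≤ ⟪p - q, x - y⟫)
    (hGmax : ∀ x p : H, (∀ y q : H, q ∈ G y → 0 ≤ ⟪p - q, x - y⟫) → p ∈ G x)
    (Ω : Set H) (hΩ : Ω = {x : H | -F x ∈ G x}) (hΩne : Ω.Nonempty)
    (μ : ℝ) (hμ : μ ∈ Set.Ioo (0 : ℝ) 1)
    (α : ℕ → ℝ) (hα : ∀ n, α n ∈ Set.Ico (0 : ℝ) 1)
    (x w y z : ℕ → H) (γ : ℕ → ℝ) (hγpos : ∀ n, 0 < γ n)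
    (C Q : ℕ → Set H)
    (hw : ∀ n, w (n + 1) = x (n + 1) + α (n + 1) • (x (n + 1) - x n))
    (hres : ∀ n, w n - γ n • F (w n) - y n ∈ γ n • G (y n))
    (hz : ∀ n, z n = y n - γ n • (F (y n) - F (w n)))
    (hγrec : ∀ n, γ (n + 1) =
      if F (w n) ≠ F (y n)
      then min (μ * ‖w n - y n‖ / ‖F (w n) - F (y n)‖) (γ n)
      else γ n)
    (hC : ∀ n, C n = {u : H | ‖z n - u‖ ^ 2 ≤
      ‖w n - u‖ ^ 2 - (1 - μ ^ 2 * γ n ^ 2 / γ (n + 1) ^ 2) * ‖w n - y n‖ ^ 2})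
    (hQ : ∀ n, Q n = {u : H | ⟪x n - u, x n - x 0⟫ ≤ 0})
    (hproj : ∀ n, x (n + 1) ∈ C n ∩ Q n ∧
      ∀ v ∈ C n ∩ Q n, ‖x 0 - x (n + 1)‖ ≤ ‖x 0 - v‖) :
    ∃ q : H, (q ∈ Ω ∧ ∀ v ∈ Ω, ‖x 0 - q‖ ≤ ‖x 0 - v‖) ∧
      Tendsto x atTop (nhds q) := by
  obtain ⟨hμ0, hμ1⟩ := hμ
  obtain rfl : Q = cqHalfSpace x := funext hQ
  choose g hgG hg using fun n => Set.mem_smul_set.1 (hres n)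
  obtain ⟨γ', hγ', hγlim⟩ := exists_tendsto_of_adaptiveStep hγrec (hγpos 0) hμ0 hL hFlip
  have hΩM : Ω ⊆ mintySet F G := hΩ ▸ setOf_neg_mem_subset_mintySet hFmono hGmono
  have hhyb : IsHybridProjection x C (mintySet F G) :=
    ⟨fun n => hC n ▸ convex_setOf_norm_sub_sq_le _ _ _,
      fun n u hu => hC n ▸ hz n ▸ norm_sub_sq_le_of_mem_mintySet hu (hgG n) (hg n) (hγpos n)
        (hγpos (n + 1)) ((hγrec n).symm ▸ adaptiveStep_mul_norm_sub_le hμ0.le), hproj⟩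
  obtain ⟨v, hv⟩ := hΩne.mono hΩM
  have hxx := hhyb.tendsto_norm_succ_sub ⟨v, hv⟩
  have hwx := tendsto_norm_sub_of_inertial (fun n => Set.Ico_subset_Icc_self (hα n)) hw hxx
  have hwy := tendsto_norm_sub_of_sq_le (by nlinarith)
    (tendsto_one_sub_mul_sq_div_sq μ hγ'.ne' hγlim) (fun n => hC n ▸ (hproj n).1.1) hxx hwx
  have hxy : Tendsto (fun n => ‖x n - y n‖) atTop (𝓝 0) :=
    squeeze_zero (fun n => norm_nonneg _) (fun n => norm_sub_rev (x n) (w n) ▸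
      norm_sub_le_norm_sub_add_norm_sub (x n) (w n) (y n)) (by simpa using hwx.add hwy)
  have hgy : Tendsto (fun n => ‖g n + F (y n)‖) atTop (𝓝 0) :=
    squeeze_zero (fun n => norm_nonneg _)
      (fun n => norm_add_le_of_smul_eq (hγpos n) (hg n) (hFlip _ _))
      (by simpa using ((hγlim.inv₀ hγ'.ne').add_const L).mul hwy)
  obtain ⟨u, hu⟩ := exists_isWeakClusterPt (hhyb.norm_le hv)
  have huM := mem_mintySet_of_isWeakClusterPt hFmono hGmono (hhyb.norm_le hv) hgG hxy hgy hu
  have hxu := hhyb.tendsto_of_isWeakClusterPt huM hu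
  have hFcont : Continuous F := (LipschitzWith.of_dist_le' (K := L) fun a b => by
    simpa only [dist_eq_norm] using hFlip a b).continuous
  have hyu : Tendsto y atTop (𝓝 u) := hxu.congr_dist (by simpa only [dist_eq_norm] using hxy)
  have huΩ : u ∈ Ω := hΩ ▸ neg_mem_of_tendsto hFcont hGmono hGmax hgG hyu hgy
  exact ⟨u, ⟨huΩ, fun v hv => (hhyb.isMetricProj_of_tendsto huM hxu).2 v (hΩM hv)⟩, hxu⟩

/-- Theorem 3.1: strong convergence of the Inertial Hybrid Projection Algorithm. -/
theorem thm31_IHPA {H : Type*} [NormedAddCommGroup H] [InnerProductSpace ℝ H]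
    [CompleteSpace H]
    (F : H → H) (G : H → Set H) (L : ℝ) (hL : 0 < L)
    (hFmono : ∀ x y : H, 0 ≤ ⟪F x - F y, x - y⟫)
    (hFlip : ∀ x y : H, ‖F x - F y‖ ≤ L * ‖x - y‖)
    (hGmono : ∀ x y p q : H, p ∈ G x → q ∈ G y → 0 ≤ ⟪p - q, x - y⟫)
    (hGmax : ∀ x p : H, (∀ y q : H, q ∈ G y → 0 ≤ ⟪p - q, x - y⟫) → p ∈ G x)
    (Ω : Set H) (hΩ : Ω = {x : H | -F x ∈ G x}) (hΩne : Ω.Nonempty)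
    (μ : ℝ) (hμ : μ ∈ Set.Ioo (0 : ℝ) 1)
    (α : ℕ → ℝ) (hα : ∀ n, α n ∈ Set.Ico (0 : ℝ) 1)
    (x w y z : ℕ → H) (γ : ℕ → ℝ) (hγpos : ∀ n, 0 < γ n)
    (C Q : ℕ → Set H)
    (hw0 : w 0 = x 0)
    (hw : ∀ n, w (n + 1) = x (n + 1) + α (n + 1) • (x (n + 1) - x n))
    (hres : ∀ n, w n - γ n • F (w n) - y n ∈ γ n • G (y n))
    (hz : ∀ n, z n = y n - γ n • (F (y n) - F (w n)))
    (hγrec : ∀ n, γ (n + 1) =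
      if F (w n) ≠ F (y n)
      then min (μ * ‖w n - y n‖ / ‖F (w n) - F (y n)‖) (γ n)
      else γ n)
    (hC : ∀ n, C n = {u : H | ‖z n - u‖ ^ 2 ≤
      ‖w n - u‖ ^ 2 - (1 - μ ^ 2 * γ n ^ 2 / γ (n + 1) ^ 2) * ‖w n - y n‖ ^ 2})
    (hQ : ∀ n, Q n = {u : H | ⟪x n - u, x n - x 0⟫ ≤ 0})
    (hproj : ∀ n, x (n + 1) ∈ C n ∩ Q n ∧
      ∀ v ∈ C n ∩ Q n, ‖x 0 - x (n + 1)‖ ≤ ‖x 0 - v‖) :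
    ∃ q : H, (q ∈ Ω ∧ ∀ v ∈ Ω, ‖x 0 - q‖ ≤ ‖x 0 - v‖) ∧
      Tendsto x atTop (nhds q) :=
  thm31_IHPA_general F G L hL hFmono hFlip hGmono hGmax Ω hΩ hΩne μ hμ α hα x w y z γ hγpos C Q hw
    hres hz hγrec hC hQ hproj
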